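/- arXiv:2003.13188 — 5 statements merged into one kernel-verified Lean document; each statement's English description precedes it below -/
import Mathlib

section
/- Let Ω = {(x,y) ∈ ℝ² : x + y ≥ 1 and x² + xy + y² ≤ 1}. If y = (y₁,y₂,y₃) ∈ ℝ³ has y₃ > 0 and (y₁/y₃, y₂/y₃) ∈ Ω, then for each d ∈ {1,…,5}, the vector M_d y has positive third coordinate and its normalization represents a point in Ω. -/
/-!
In homogeneous coordinates `y = (u, v, w)` with `w > 0`, the point `(u/w, v/w)` lies in `Ω` iff
`w ≤ u + v` and `Q y ≤ 0`, where `Q y = u² + uv + v² - w²`. Each `M_d` is an isometry of the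
Lorentzian form `Q`, so only the linear conditions need checking. On `Ω` both `u` and `v` lie in
`[0, w]`, and there the new third coordinate and the new quantity `u + v - w` are sums of
nonnegative terms such as `w - u`, `w + v` or `6u + 7w`.
-/

noncomputable def Mmat : Fin 5 → Matrix (Fin 3) (Fin 3) ℝ :=
  ![!![-3, 1, 4; -4, -1, 4; -6, 0, 7],
    !![4, 1, 4; 3, -1, 4; 6, 0, 7],
    !![4, 3, 4; 3, 4, 4; 6, 6, 7],
    !![-1, 3, 4; 1, 4, 4; 0, 6, 7],
    !![-1, -4, 4; 1, -3, 4; 0, -6, 7]]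

open Matrix

section Dehomogenize

variable {K : Type*} [Field K] [LinearOrder K] [IsStrictOrderedRing K] {u v w : K}

theorem one_le_div_add_div_iff (hw : 0 < w) : 1 ≤ u / w + v / w ↔ w ≤ u + v := by
  rw [← add_div, one_le_div hw]

theorem div_sq_add_div_mul_div_add_div_sq_le_one_iff (hw : 0 < w) :
    (u / w) ^ 2 + u / w * (v / w) + (v / w) ^ 2 ≤ 1 ↔ u ^ 2 + u * v + v ^ 2 ≤ w ^ 2 := by
  have hw2 : 0 < w ^ 2 := by positivity
  rw [show (u / w) ^ 2 + u / w * (v / w) + (v / w) ^ 2 = (u ^ 2 + u * v + v ^ 2) / w ^ 2 by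
    field_simp, div_le_one hw2]

end Dehomogenize

def omegaForm (y : Fin 3 → ℝ) : ℝ := y 0 ^ 2 + y 0 * y 1 + y 1 ^ 2 - y 2 ^ 2

def InOmegaCone (y : Fin 3 → ℝ) : Prop :=
  0 < y 2 ∧ y 2 ≤ y 0 + y 1 ∧ omegaForm y ≤ 0

theorem inOmegaCone_iff (y : Fin 3 → ℝ) :
    InOmegaCone y ↔ 0 < y 2 ∧ 1 ≤ y 0 / y 2 + y 1 / y 2 ∧
      (y 0 / y 2) ^ 2 + y 0 / y 2 * (y 1 / y 2) + (y 1 / y 2) ^ 2 ≤ 1 := by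
  refine ⟨fun ⟨hw, hsum, hQ⟩ => ?_, fun ⟨hw, hsum, hquad⟩ => ?_⟩
  · rw [one_le_div_add_div_iff hw, div_sq_add_div_mul_div_add_div_sq_le_one_iff hw]
    exact ⟨hw, hsum, by unfold omegaForm at hQ; linarith⟩
  · rw [one_le_div_add_div_iff hw] at hsum
    rw [div_sq_add_div_mul_div_add_div_sq_le_one_iff hw] at hquad
    exact ⟨hw, hsum, by unfold omegaForm; linarith⟩

theorem InOmegaCone.bounds {y : Fin 3 → ℝ} (hy : InOmegaCone y) :
    0 ≤ y 0 ∧ y 0 ≤ y 2 ∧ 0 ≤ y 1 ∧ y 1 ≤ y 2 := by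
  obtain ⟨hw, hsum, hQ⟩ := hy
  unfold omegaForm at hQ
  -- `u² + uv + v² ≤ w² ≤ (u + v)²` forces `uv ≥ 0`, and `u + v ≥ w > 0` then rules out `u, v ≤ 0`.
  have hsq : y 2 ^ 2 ≤ (y 0 + y 1) ^ 2 := pow_le_pow_left₀ hw.le hsum 2
  have hprod : 0 ≤ y 0 * y 1 := by nlinarith
  have hu : 0 ≤ y 0 := by
    by_contra! hu
    have : y 1 ≤ 0 := nonpos_of_mul_nonneg_right hprod hu
    linarith
  have hv : 0 ≤ y 1 := by
    by_contra! hv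
    have : y 0 ≤ 0 := nonpos_of_mul_nonneg_left hprod hv
    linarith
  refine ⟨hu, (pow_le_pow_iff_left₀ hu hw.le two_ne_zero).1 ?_, hv,
    (pow_le_pow_iff_left₀ hv hw.le two_ne_zero).1 ?_⟩ <;> nlinarith

theorem omegaForm_mmat_mulVec (d : Fin 5) (y : Fin 3 → ℝ) :
    omegaForm (Mmat d *ᵥ y) = omegaForm y := by
  fin_cases d <;>
    simp only [omegaForm, Mmat, mulVec, dotProduct, Fin.sum_univ_three, of_apply, cons_val',
      cons_val_zero, cons_val_one, cons_val, cons_val_fin_one, Fin.isValue, Fin.zero_eta, Fin.mk_one,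
      Fin.reduceFinMk] <;> ring

theorem mmat_mulVec_linear_conditions (d : Fin 5) {y : Fin 3 → ℝ} (hw : 0 < y 2)
    (hu : 0 ≤ y 0) (hu' : y 0 ≤ y 2) (hv : 0 ≤ y 1) (hv' : y 1 ≤ y 2) :
    0 < (Mmat d *ᵥ y) 2 ∧ (Mmat d *ᵥ y) 2 ≤ (Mmat d *ᵥ y) 0 + (Mmat d *ᵥ y) 1 := by
  fin_cases d <;>
    simp only [Mmat, mulVec, dotProduct, Fin.sum_univ_three, of_apply, cons_val',
      cons_val_zero, cons_val_one, cons_val, cons_val_fin_one, Fin.isValue, Fin.zero_eta, Fin.mk_one,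
      Fin.reduceFinMk] <;>
    constructor <;> linarith

theorem InOmegaCone.mmat_mulVec {y : Fin 3 → ℝ} (hy : InOmegaCone y) (d : Fin 5) :
    InOmegaCone (Mmat d *ᵥ y) := by
  obtain ⟨hu, hu', hv, hv'⟩ := hy.bounds
  obtain ⟨hw', hsum'⟩ := mmat_mulVec_linear_conditions d hy.1 hu hu' hv hv'
  exact ⟨hw', hsum', (omegaForm_mmat_mulVec d y).trans_le hy.2.2⟩

theorem M_preserves_Omega (y : Fin 3 → ℝ) (hy : 0 < y 2)
    (hsum : 1 ≤ y 0 / y 2 + y 1 / y 2)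
    (hquad : (y 0 / y 2) ^ 2 + (y 0 / y 2) * (y 1 / y 2) + (y 1 / y 2) ^ 2 ≤ 1)
    (d : Fin 5) :
    0 < (Mmat d).mulVec y 2 ∧
      1 ≤ (Mmat d).mulVec y 0 / (Mmat d).mulVec y 2 +
          (Mmat d).mulVec y 1 / (Mmat d).mulVec y 2 ∧
      ((Mmat d).mulVec y 0 / (Mmat d).mulVec y 2) ^ 2 +
          ((Mmat d).mulVec y 0 / (Mmat d).mulVec y 2) *
            ((Mmat d).mulVec y 1 / (Mmat d).mulVec y 2) +
          ((Mmat d).mulVec y 1 / (Mmat d).mulVec y 2) ^ 2 ≤ 1 :=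
  (inOmegaCone_iff _).1 (((inOmegaCone_iff y).2 ⟨hy, hsum, hquad⟩).mmat_mulVec d)
end

section
/- If z₁ and z₂ are distinct primitive integral vectors in ℤ³ with positive third coordinates satisfying Q(z₁) = Q(z₂) = 0 where Q(x₁,x₂,x₃) = x₁² + x₁x₂ + x₂² - x₃², then ⟨z₁, z₂⟩ ≤ -1/2, where ⟨x,y⟩ = x₁y₁ + (x₁y₂+x₂y₁)/2 + x₂y₂ - x₃y₃. -/
/-!
The integer `B = 2⟨z₁, z₂⟩ + 2c₁c₂ = 2a₁a₂ + a₁b₂ + a₂b₁ + 2b₁b₂` is the polar form of the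
positive definite binary form `a² + ab + b²`, so the Lagrange-type identity
`B² + 3(a₁b₂ - a₂b₁)² = 4(a₁² + a₁b₁ + b₁²)(a₂² + a₂b₂ + b₂²) = 4c₁²c₂²` gives `B ≤ 2c₁c₂`,
i.e. `2⟨z₁, z₂⟩ ≤ 0`. In the equality case the binary form vanishes at `c₂(a₁, b₁) - c₁(a₂, b₂)`,
so `z₁` and `z₂` are proportional, and primitivity with `c₁, c₂ > 0` forces `z₁ = z₂`.
Hence `2⟨z₁, z₂⟩` is a negative integer.
-/

section OrderedRing

variable {R : Type*} [CommRing R] [LinearOrder R] [IsStrictOrderedRing R]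

theorem eq_zero_of_sq_add_mul_add_sq_eq_zero {a b : R} (h : a ^ 2 + a * b + b ^ 2 = 0) :
    a = 0 ∧ b = 0 := by
  have hb : b = 0 := by nlinarith [sq_nonneg (2 * a + b), sq_nonneg b]
  subst hb
  exact ⟨by simpa using h, rfl⟩

theorem polar_le_of_isotropic {a₁ b₁ c₁ a₂ b₂ c₂ : R}
    (hQ₁ : a₁ ^ 2 + a₁ * b₁ + b₁ ^ 2 - c₁ ^ 2 = 0)
    (hQ₂ : a₂ ^ 2 + a₂ * b₂ + b₂ ^ 2 - c₂ ^ 2 = 0) (hc : 0 ≤ c₁ * c₂) :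
    2 * a₁ * a₂ + a₁ * b₂ + a₂ * b₁ + 2 * b₁ * b₂ ≤ 2 * c₁ * c₂ := by
  have lagrange : (2 * a₁ * a₂ + a₁ * b₂ + a₂ * b₁ + 2 * b₁ * b₂) ^ 2
      + 3 * (a₁ * b₂ - a₂ * b₁) ^ 2 = (2 * c₁ * c₂) ^ 2 := by
    linear_combination (4 * (a₂ ^ 2 + a₂ * b₂ + b₂ ^ 2)) * hQ₁ + (4 * c₁ ^ 2) * hQ₂
  have hsq : (2 * a₁ * a₂ + a₁ * b₂ + a₂ * b₁ + 2 * b₁ * b₂) ^ 2 ≤ (2 * c₁ * c₂) ^ 2 := by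
    nlinarith [sq_nonneg (a₁ * b₂ - a₂ * b₁)]
  exact le_of_abs_le (abs_le_of_sq_le_sq hsq (by rw [mul_assoc]; positivity))

theorem proportional_of_polar_eq {a₁ b₁ c₁ a₂ b₂ c₂ : R}
    (hQ₁ : a₁ ^ 2 + a₁ * b₁ + b₁ ^ 2 - c₁ ^ 2 = 0)
    (hQ₂ : a₂ ^ 2 + a₂ * b₂ + b₂ ^ 2 - c₂ ^ 2 = 0)
    (heq : 2 * a₁ * a₂ + a₁ * b₂ + a₂ * b₁ + 2 * b₁ * b₂ = 2 * c₁ * c₂) :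
    c₂ * a₁ = c₁ * a₂ ∧ c₂ * b₁ = c₁ * b₂ := by
  obtain ⟨ha, hb⟩ := eq_zero_of_sq_add_mul_add_sq_eq_zero (a := c₂ * a₁ - c₁ * a₂)
    (b := c₂ * b₁ - c₁ * b₂) (by linear_combination c₂ ^ 2 * hQ₁ + c₁ ^ 2 * hQ₂ - c₁ * c₂ * heq)
  exact ⟨sub_eq_zero.mp ha, sub_eq_zero.mp hb⟩

end OrderedRing

theorem Int.dvd_of_proportional {a₁ b₁ c₁ a₂ b₂ c₂ : ℤ} (hprim : Int.gcd (Int.gcd a₁ b₁) c₁ = 1)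
    (ha : c₂ * a₁ = c₁ * a₂) (hb : c₂ * b₁ = c₁ * b₂) : c₁ ∣ c₂ := by
  have hdvd : c₁ ∣ (Int.gcd (c₂ * a₁) (c₂ * b₁) : ℤ) :=
    Int.dvd_coe_gcd ⟨a₂, ha⟩ ⟨b₂, hb⟩
  rw [Int.gcd_mul_left, Nat.cast_mul, Int.natCast_natAbs] at hdvd
  exact (dvd_abs _ _).mp ((Int.isCoprime_iff_gcd_eq_one.mpr hprim).symm.dvd_of_dvd_mul_right hdvd)

theorem Int.eq_of_primitive_of_proportional {a₁ b₁ c₁ a₂ b₂ c₂ : ℤ}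
    (hprim₁ : Int.gcd (Int.gcd a₁ b₁) c₁ = 1) (hprim₂ : Int.gcd (Int.gcd a₂ b₂) c₂ = 1)
    (hc₁ : 0 < c₁) (hc₂ : 0 < c₂) (ha : c₂ * a₁ = c₁ * a₂) (hb : c₂ * b₁ = c₁ * b₂) :
    a₁ = a₂ ∧ b₁ = b₂ ∧ c₁ = c₂ := by
  have hc : c₁ = c₂ := le_antisymm (Int.le_of_dvd hc₂ (Int.dvd_of_proportional hprim₁ ha hb))
    (Int.le_of_dvd hc₁ (Int.dvd_of_proportional hprim₂ ha.symm hb.symm))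
  subst hc
  exact ⟨mul_left_cancel₀ hc₁.ne' ha, mul_left_cancel₀ hc₁.ne' hb, rfl⟩

theorem pairing_le_neg_half_of_primitive
    (a₁ b₁ c₁ a₂ b₂ c₂ : ℤ)
    (hprim₁ : Int.gcd (Int.gcd a₁ b₁) c₁ = 1)
    (hprim₂ : Int.gcd (Int.gcd a₂ b₂) c₂ = 1)
    (hc₁ : 0 < c₁) (hc₂ : 0 < c₂)
    (hQ₁ : a₁ ^ 2 + a₁ * b₁ + b₁ ^ 2 - c₁ ^ 2 = 0)
    (hQ₂ : a₂ ^ 2 + a₂ * b₂ + b₂ ^ 2 - c₂ ^ 2 = 0)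
    (hne : ¬(a₁ = a₂ ∧ b₁ = b₂ ∧ c₁ = c₂)) :
    (a₁ : ℝ) * a₂ + ((a₁ : ℝ) * b₂ + (a₂ : ℝ) * b₁) / 2 + (b₁ : ℝ) * b₂
        - (c₁ : ℝ) * c₂ ≤ -1 / 2 := by
  have hlt : 2 * a₁ * a₂ + a₁ * b₂ + a₂ * b₁ + 2 * b₁ * b₂ < 2 * c₁ * c₂ := by
    refine (polar_le_of_isotropic hQ₁ hQ₂ (mul_pos hc₁ hc₂).le).lt_of_ne fun heq => hne ?_
    obtain ⟨ha, hb⟩ := proportional_of_polar_eq hQ₁ hQ₂ heq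
    exact Int.eq_of_primitive_of_proportional hprim₁ hprim₂ hc₁ hc₂ ha hb
  have hle : ((2 * a₁ * a₂ + a₁ * b₂ + a₂ * b₁ + 2 * b₁ * b₂ + 1 : ℤ) : ℝ)
      ≤ ((2 * c₁ * c₂ : ℤ) : ℝ) := by exact_mod_cast hlt
  push_cast at hle
  linarith
end

section
/- For a point P = (α, β) on the curve x² + xy + y² = 1 with α, β ≥ 0, define ‖P‖ = √3(α + β − 1)/(−2α − β + 2) and P^∨ = (β, α). Then ‖P‖ · ‖P^∨‖ = 1 (interpreting ∞·0 = 1 in the degenerate cases). -/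
theorem norm_mul_norm_vee_eq_one
    (α β : ℝ) (hcurve : α ^ 2 + α * β + β ^ 2 = 1)
    (hα : 0 ≤ α) (hβ : 0 ≤ β)
    (hden₁ : -2 * α - β + 2 ≠ 0) (hden₂ : -2 * β - α + 2 ≠ 0) :
    (Real.sqrt 3 * (α + β - 1) / (-2 * α - β + 2)) *
      (Real.sqrt 3 * (β + α - 1) / (-2 * β - α + 2)) = 1 := by
  have h3 : Real.sqrt 3 * Real.sqrt 3 = 3 := Real.mul_self_sqrt (by norm_num)
  rw [div_mul_div_comm, div_eq_one_iff_eq (mul_ne_zero hden₁ hden₂)]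
  nlinarith [h3, hcurve]
end

section
/- Let P = (α, β) with α² + αβ + β² = 1 and α, β ≥ 0, and let θ(P) ∈ [0, π/3] be the angle defined by cos θ(P) = α + β/2 and sin θ(P) = (√3/2)β. Then cot(θ(P)/2) = 2‖P‖ + √3, where ‖P‖ = √3(α + β − 1)/(−2α − β + 2). -/
theorem cot_half_angle_eq
    (α β θ : ℝ) (hcurve : α ^ 2 + α * β + β ^ 2 = 1)
    (hα : 0 ≤ α) (hβ : 0 ≤ β) (hne : (α, β) ≠ (1, 0))
    (hθ₀ : 0 ≤ θ) (hθ₁ : θ ≤ Real.pi / 3)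
    (hcos : Real.cos θ = α + β / 2)
    (hsin : Real.sin θ = Real.sqrt 3 / 2 * β) :
    Real.cot (θ / 2) =
      2 * (Real.sqrt 3 * (α + β - 1) / (-2 * α - β + 2)) + Real.sqrt 3 := by
  have hr : Real.sqrt 3 ^ 2 = 3 := Real.sq_sqrt (by norm_num)
  have hrpos : (0:ℝ) < Real.sqrt 3 := Real.sqrt_pos.mpr (by norm_num)
  have hpi := Real.pi_pos
  have hθpos : 0 < θ := by
    rcases hθ₀.lt_or_eq with h | h
    · exact h
    · exfalso
      have hs0 : Real.sin θ = 0 := by rw [← h, Real.sin_zero]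
      have hc0 : Real.cos θ = 1 := by rw [← h, Real.cos_zero]
      have hβ0 : β = 0 := by nlinarith
      have hα1 : α = 1 := by nlinarith
      exact hne (by simp [hα1, hβ0])
  have hs : 0 < Real.sin (θ / 2) :=
    Real.sin_pos_of_pos_of_lt_pi (by linarith) (by linarith)
  have hc : 0 < Real.cos (θ / 2) :=
    Real.cos_pos_of_mem_Ioo ⟨by linarith, by linarith⟩
  have hsin2 : Real.sin θ = 2 * Real.sin (θ / 2) * Real.cos (θ / 2) := by
    have := Real.sin_two_mul (θ / 2)
    have h2 : 2 * (θ / 2) = θ := by ring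
    rw [h2] at this
    linarith
  have hpy : Real.sin (θ / 2) ^ 2 + Real.cos (θ / 2) ^ 2 = 1 :=
    Real.sin_sq_add_cos_sq _
  have hcos2 : Real.cos θ = 1 - 2 * Real.sin (θ / 2) ^ 2 := by
    have := Real.cos_two_mul (θ / 2)
    have h2 : 2 * (θ / 2) = θ := by ring
    rw [h2] at this
    nlinarith
  have hden : -2 * α - β + 2 = 4 * Real.sin (θ / 2) ^ 2 := by
    linarith [hcos, hcos2]
  rw [Real.cot_eq_cos_div_sin, hden]
  rw [hsin2] at hsin
  rw [hcos2] at hcos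
  field_simp
  nlinarith [hr, hsin, hcos, hpy, hs, hc, hrpos, sq_nonneg (Real.sin (θ/2)),
    mul_pos hs hc, mul_pos hrpos hs]
end

section
/- Let t = (√13 + 1)/(2√3) (the positive fixed point of x ↦ (2x+√3)/(√3x+1)), and let s = (2·(1/t) + √3)/(√3·(1/t) + 2). Then s + t = 4/√3. -/
theorem lagrange_of_232 :
    let t := (Real.sqrt 13 + 1) / (2 * Real.sqrt 3)
    let s := (2 * (1 / t) + Real.sqrt 3) / (Real.sqrt 3 * (1 / t) + 2)
    t = (2 * t + Real.sqrt 3) / (Real.sqrt 3 * t + 1) ∧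
      s + t = 4 / Real.sqrt 3 := by
  intro t s
  have ha : Real.sqrt 13 ^ 2 = 13 := Real.sq_sqrt (by norm_num)
  have hb : Real.sqrt 3 ^ 2 = 3 := Real.sq_sqrt (by norm_num)
  have ha1 : (3:ℝ) < Real.sqrt 13 := by
    nlinarith [Real.sqrt_nonneg 13]
  have hb1 : (1:ℝ) < Real.sqrt 3 := by
    nlinarith [Real.sqrt_nonneg 3]
  have ht : t = (Real.sqrt 13 + 1) / (2 * Real.sqrt 3) := rfl
  have htpos : 0 < t := by rw [ht]; positivity
  have hden : Real.sqrt 3 * t + 1 > 0 := by positivity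
  have h1 : t = (2 * t + Real.sqrt 3) / (Real.sqrt 3 * t + 1) := by
    rw [ht]; field_simp; nlinarith
  refine ⟨h1, ?_⟩
  have hs : s = (2 * (1 / t) + Real.sqrt 3) / (Real.sqrt 3 * (1 / t) + 2) := rfl
  rw [hs, ht]
  have h3 : Real.sqrt 3 ≠ 0 := by positivity
  have h13 : Real.sqrt 13 + 1 ≠ 0 := by positivity
  field_simp
  have hc : Real.sqrt 3 ^ 3 = 3 * Real.sqrt 3 := by
    rw [pow_succ, hb]
  have hd : Real.sqrt 3 * Real.sqrt 13 ^ 2 = 13 * Real.sqrt 3 := by rw [ha]; ring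
  ring_nf
  nlinarith [ha, hb, hc, hd]
end
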